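/- With B skew-symmetrizable, SRB skew-symmetric for positive diagonal integer matrices S, R, and E_k^ε as above, the generalized matrix mutation satisfies μ_k^g(B) = E_k^ε · B · R^{-1} S^{-1} · (E_k^ε)^⊤ · S R for either sign ε. -/

import Mathlib

/-! Put `D = SR`. Skew-symmetry of `DB` gives `d_j [ε b_jk]₊ = d_k [-ε b_kj]₊`, so conjugating
`(E_k^ε)ᵀ` by `D` turns it into `F_k^ε`, the identity with row `k` replaced by
`(r_k [-ε b_kj]₊)_j` and `-1` on the diagonal. It remains to check `E_k^ε B F_k^ε = μ_k^g B`
entrywise, which uses `b_kk = 0` and `[εx]₊ y + x [-εy]₊ = [x]₊ y + x [-y]₊` for `ε = ±1`. -/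

open Matrix

/-- The generalized matrix mutation `μ_k^g` in direction `k`, with parameters `r`. -/
def genMut {n : ℕ} (r : Fin n → ℤ) (k : Fin n)
    (B : Matrix (Fin n) (Fin n) ℤ) : Matrix (Fin n) (Fin n) ℤ :=
  Matrix.of fun i j =>
    if i = k ∨ j = k then -B i j
    else B i j + r k * (B i k * max (-B k j) 0 + max (B i k) 0 * B k j)

/-- The matrix `E_k^ε` (over ℚ): identity except in column `k`, where `e_{kk} = -1`
and `e_{ik} = [ε b_{ik}]₊ · r_k` for `i ≠ k`. -/
def Emat {n : ℕ} (r : Fin n → ℤ) (B : Matrix (Fin n) (Fin n) ℤ) (k : Fin n) (ε : ℤ) :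
    Matrix (Fin n) (Fin n) ℚ :=
  Matrix.of fun i l =>
    if l ≠ k then (if i = l then 1 else 0)
    else if i = k then -1 else ((max (ε * B i k) 0 * r k : ℤ) : ℚ)

section

variable {ι α : Type*} [Fintype ι] [DecidableEq ι]

theorem updateCol_one_mul_apply [NonAssocSemiring α] (k : ι) (v : ι → α) (M : Matrix ι ι α)
    (i j : ι) :
    ((1 : Matrix ι ι α).updateCol k v * M) i j = (if i = k then 0 else M i j) + v i * M k j := by
  rw [mul_apply, ← Finset.add_sum_erase _ _ (Finset.mem_univ k), add_comm, updateCol_self]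
  congr 1
  rw [Finset.sum_congr rfl fun x hx => by
    rw [updateCol_ne (Finset.ne_of_mem_erase hx), one_apply, ite_mul, one_mul, zero_mul],
    Finset.sum_ite_eq]
  simp [Finset.mem_erase, ite_not]

theorem mul_updateRow_one_apply [CommSemiring α] (k : ι) (w : ι → α) (M : Matrix ι ι α)
    (i j : ι) :
    (M * (1 : Matrix ι ι α).updateRow k w) i j = (if j = k then 0 else M i j) + M i k * w j := by
  rw [← transpose_apply (M * _), transpose_mul, ← updateCol_transpose, transpose_one,
    updateCol_one_mul_apply, mul_comm]
  rfl

theorem diagonal_inv_mul_updateRow_one_mul_diagonal [Field α] {d : ι → α} (hd : ∀ i, d i ≠ 0)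
    (k : ι) (w : ι → α) :
    diagonal (fun i => (d i)⁻¹) * (1 : Matrix ι ι α).updateRow k w * diagonal d =
      (1 : Matrix ι ι α).updateRow k fun j => (d k)⁻¹ * w j * d j := by
  ext a b
  rw [mul_diagonal, diagonal_mul, updateRow_apply, updateRow_apply]
  split_ifs with hak
  · rw [hak]
  · rw [one_apply]
    split_ifs with hab
    · rw [hab, mul_one, inv_mul_cancel₀ (hd b)]
    · simp

theorem mul_apply_eq_neg_of_transpose_diagonal_mul_eq_neg [Ring α] {d : ι → α}
    {B : Matrix ι ι α} (h : (diagonal d * B)ᵀ = -(diagonal d * B)) (i j : ι) :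
    d i * B i j = -(d j * B j i) := by
  simpa [diagonal_mul] using congr_fun₂ h j i

end

theorem max_mul_add_mul_max_neg_eq {α : Type*} [CommRing α] [LinearOrder α] [IsOrderedRing α]
    {ε : α} (hε : ε = 1 ∨ ε = -1) (x y : α) :
    max (ε * x) 0 * y + x * max (-(ε * y)) 0 = max x 0 * y + x * max (-y) 0 := by
  rcases hε with rfl | rfl
  · simp
  · simp only [neg_one_mul, neg_neg]
    have hx := posPart_sub_negPart x
    have hy := posPart_sub_negPart y
    rw [posPart_def, negPart_def] at hx hy
    linear_combination x * hy - y * hx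

theorem max_mul_eq_max_neg_mul_of_mul_eq_neg {α : Type*} [CommRing α] [LinearOrder α]
    [IsOrderedRing α] (ε : α) {a b x y : α} (ha : 0 ≤ a) (hb : 0 ≤ b) (h : a * x = -(b * y)) :
    max (ε * x) 0 * a = max (-(ε * y)) 0 * b := by
  rw [max_mul_of_nonneg _ _ ha, max_mul_of_nonneg _ _ hb, zero_mul, zero_mul]
  congr 1
  linear_combination ε * h

def Fmat {n : ℕ} (r : Fin n → ℤ) (B : Matrix (Fin n) (Fin n) ℤ) (k : Fin n) (ε : ℤ) :
    Matrix (Fin n) (Fin n) ℚ :=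
  (1 : Matrix (Fin n) (Fin n) ℚ).updateRow k fun j =>
    if j = k then -1 else ((max (-(ε * B k j)) 0 * r k : ℤ) : ℚ)

section

variable {n : ℕ} (r : Fin n → ℤ) (B : Matrix (Fin n) (Fin n) ℤ) (k : Fin n) (ε : ℤ)

theorem Emat_eq_updateCol :
    Emat r B k ε = (1 : Matrix (Fin n) (Fin n) ℚ).updateCol k fun i =>
      if i = k then -1 else ((max (ε * B i k) 0 * r k : ℤ) : ℚ) := by
  ext i l
  rw [updateCol_apply, Emat, of_apply, one_apply]
  by_cases hl : l = k <;> simp [hl]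

theorem genMut_map_eq_Emat_mul_mul_Fmat (hε : ε = 1 ∨ ε = -1) (hB : B k k = 0) :
    (genMut r k B).map (Int.cast : ℤ → ℚ) =
      Emat r B k ε * B.map (Int.cast : ℤ → ℚ) * Fmat r B k ε := by
  ext i j
  rw [Matrix.mul_assoc, Emat_eq_updateCol, Fmat, updateCol_one_mul_apply,
    mul_updateRow_one_apply, mul_updateRow_one_apply]
  simp only [map_apply, genMut, of_apply]
  by_cases hi : i = k <;> by_cases hj : j = k
  · simp [hi, hj, hB]
  · simp [hi, hj, hB]
  · simp [hi, hj, hB]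
  · have hεq : (ε : ℚ) = 1 ∨ (ε : ℚ) = -1 := by exact_mod_cast hε
    simp only [hi, hj, hB, or_self, if_false]
    push_cast
    linear_combination -(r k : ℚ) * max_mul_add_mul_max_neg_eq hεq (B i k : ℚ) (B k j)

theorem diagonal_inv_mul_Emat_transpose_mul_diagonal {d : Fin n → ℤ} (hd : ∀ i, 0 < d i)
    (hskew : ∀ i, d i * B i k = -(d k * B k i)) :
    diagonal (fun i => ((d i : ℚ))⁻¹) * (Emat r B k ε)ᵀ * diagonal (fun i => (d i : ℚ)) =
      Fmat r B k ε := by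
  have hdq : ∀ i, (d i : ℚ) ≠ 0 := fun i => by exact_mod_cast (hd i).ne'
  rw [Emat_eq_updateCol, ← updateRow_transpose, transpose_one,
    diagonal_inv_mul_updateRow_one_mul_diagonal hdq, Fmat]
  congr 1
  funext j
  by_cases hj : j = k
  · simp [hj, hdq k]
  · have h := congrArg (Int.cast : ℤ → ℚ)
      (max_mul_eq_max_neg_mul_of_mul_eq_neg ε (hd j).le (hd k).le (hskew j))
    simp only [hj, if_false]
    push_cast at h ⊢
    field_simp [hdq k]
    linear_combination (r k : ℚ) * h

end

/-- `μ_k^g(B) = E_k^ε · B · R⁻¹ S⁻¹ · (E_k^ε)ᵀ · S R` for either sign `ε`,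
with `S`, `R` positive integer diagonal and `S·R·B` skew-symmetric. -/
theorem genMut_eq_Emat_conj (n : ℕ) (r s : Fin n → ℤ) (hr : ∀ i, 0 < r i) (hs : ∀ i, 0 < s i)
    (B : Matrix (Fin n) (Fin n) ℤ)
    (hskew : (Matrix.diagonal s * Matrix.diagonal r * B)ᵀ =
      -(Matrix.diagonal s * Matrix.diagonal r * B))
    (k : Fin n) (ε : ℤ) (hε : ε = 1 ∨ ε = -1) :
    (genMut r k B).map (Int.cast : ℤ → ℚ) =
      Emat r B k ε * B.map (Int.cast : ℤ → ℚ) *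
        (Matrix.diagonal fun i => ((r i : ℚ))⁻¹) *
        (Matrix.diagonal fun i => ((s i : ℚ))⁻¹) *
        (Emat r B k ε)ᵀ *
        (Matrix.diagonal fun i => (s i : ℚ)) *
        (Matrix.diagonal fun i => (r i : ℚ)) := by
  set d : Fin n → ℤ := fun i => s i * r i
  have hd : ∀ i, 0 < d i := fun i => mul_pos (hs i) (hr i)
  rw [diagonal_mul_diagonal] at hskew
  have hskew_apply := mul_apply_eq_neg_of_transpose_diagonal_mul_eq_neg hskew
  have hBkk : B k k = 0 := by
    have h : d k * B k k = 0 := by linarith [hskew_apply k k]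
    exact (mul_eq_zero.mp h).resolve_left (hd k).ne'
  have hinv : (diagonal fun i => ((r i : ℚ))⁻¹) * (diagonal fun i => ((s i : ℚ))⁻¹) =
      diagonal fun i => ((d i : ℚ))⁻¹ := by
    simp [d, diagonal_mul_diagonal, mul_comm]
  have hD : (diagonal fun i => (s i : ℚ)) * (diagonal fun i => (r i : ℚ)) =
      diagonal fun i => (d i : ℚ) := by
    simp [d, diagonal_mul_diagonal]
  rw [genMut_map_eq_Emat_mul_mul_Fmat r B k ε hε hBkk,
    ← diagonal_inv_mul_Emat_transpose_mul_diagonal r B k ε hd fun i => hskew_apply i k, ← hinv, ← hD]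
  simp only [Matrix.mul_assoc]
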